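/- There exists a maximal eventually different family 𝒜 ⊆ ω^ω which is not s-measurable. -/

import Mathlib

/-!
Let `codeTree` be the perfect tree whose `n`-th entry is an even code of the first `n` entries
together with one bit. Two of its branches that agree at some position agree below it, so distinct
branches are eventually different; and `oddShift g`, which adds `1` to `g` at odd positions,
agrees with `g` at every even position but is eventually different from every other branch and
from `oddShift` of every other branch.

There are only continuum many Sacks subtrees `Q` of `codeTree`, each with continuum many branches,
so a transfinite recursion picks pairwise distinct branches `f_Q, g_Q ∈ [Q]`. A maximal eventually
different family `A` containing all `f_Q` and all `oddShift g_Q` meets every `[Q]` in `f_Q` and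
misses `g_Q`, which agrees infinitely often with `oddShift g_Q ∈ A`. So no Sacks subtree of
`codeTree` has its body inside `A` or disjoint from `A`.
-/

open Cardinal Set

/-- A tree on ω: a nonempty set of finite sequences closed under initial segments. -/
def IsTree (T : Set (List ℕ)) : Prop :=
  T.Nonempty ∧ ∀ s ∈ T, ∀ n : ℕ, s.take n ∈ T

/-- The body of a tree: all infinite branches. -/
def treeBody (T : Set (List ℕ)) : Set (ℕ → ℕ) :=
  {x | ∀ n : ℕ, (List.ofFn fun i : Fin n => x i) ∈ T}

/-- Immediate successors of a node in a tree. -/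
def succs (T : Set (List ℕ)) (t : List ℕ) : Set ℕ := {n | t ++ [n] ∈ T}

/-- Sacks (perfect) tree: every node has an extension with at least two immediate successors. -/
def IsSacksTree (T : Set (List ℕ)) : Prop :=
  IsTree T ∧ ∀ s ∈ T, ∃ t ∈ T, s <+: t ∧ (succs T t).Nontrivial

/-- Miller tree: every node has an extension with infinitely many immediate successors. -/
def IsMillerTree (T : Set (List ℕ)) : Prop :=
  IsTree T ∧ ∀ s ∈ T, ∃ t ∈ T, s <+: t ∧ (succs T t).Infinite

/-- Laver tree: has a stem (a node comparable with every node) such that every node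
extending the stem has infinitely many immediate successors. -/
def IsLaverTree (T : Set (List ℕ)) : Prop :=
  IsTree T ∧ ∃ s ∈ T, (∀ t ∈ T, s <+: t ∨ t <+: s) ∧
    ∀ t ∈ T, s <+: t → (succs T t).Infinite

/-- Complete Laver tree: every node has infinitely many immediate successors. -/
def IsCompleteLaverTree (T : Set (List ℕ)) : Prop :=
  IsTree T ∧ ∀ t ∈ T, (succs T t).Infinite

/-- The tree ideal t₀ associated with a family of trees 𝕋. -/
def treeIdeal (𝕋 : Set (Set (List ℕ))) : Set (Set (ℕ → ℕ)) :=
  {A | ∀ P ∈ 𝕋, ∃ Q ∈ 𝕋, Q ⊆ P ∧ treeBody Q ∩ A = ∅}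

/-- t-measurability with respect to a family of trees 𝕋. -/
def TMeasurable (𝕋 : Set (Set (List ℕ))) (A : Set (ℕ → ℕ)) : Prop :=
  ∀ P ∈ 𝕋, ∃ Q ∈ 𝕋, Q ⊆ P ∧ (treeBody Q ⊆ A ∨ treeBody Q ∩ A = ∅)

/-- 𝕋-Bernstein set: meets and omits the body of every tree in 𝕋. -/
def TBernstein (𝕋 : Set (Set (List ℕ))) (B : Set (ℕ → ℕ)) : Prop :=
  ∀ T ∈ 𝕋, (B ∩ treeBody T).Nonempty ∧ (B \ treeBody T).Nonempty

/-- Eventually different family. -/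
def EDFamily (A : Set (ℕ → ℕ)) : Prop :=
  ∀ f ∈ A, ∀ g ∈ A, f ≠ g → {n : ℕ | f n = g n}.Finite

/-- Maximal eventually different family. -/
def MEDFamily (A : Set (ℕ → ℕ)) : Prop :=
  EDFamily A ∧ ∀ B : Set (ℕ → ℕ), A ⊂ B → ¬ EDFamily B

universe u

theorem List.IsPrefix.getElem?_eq_some {α : Type*} {l₁ l₂ : List α} (h : l₁ <+: l₂) {i : ℕ}
    {a : α} (ha : l₁[i]? = some a) : l₂[i]? = some a := by
  obtain ⟨t, rfl⟩ := h
  rw [List.getElem?_append_left (List.getElem?_eq_some_iff.1 ha).1, ha]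

theorem List.exists_limit_of_prefix_chain {α : Type*} (L : ℕ → List α)
    (hL : ∀ n, L n <+: L (n + 1)) (hlen : ∀ n, n ≤ (L n).length) :
    ∃ x : ℕ → α, (∀ m i a, (L m)[i]? = some a → x i = a) ∧
      ∀ n, List.ofFn (fun i : Fin n => x i) = (L n).take n := by
  have hmono : ∀ {m m'}, m ≤ m' → L m <+: L m' := by
    intro m m' h
    induction m', h using Nat.le_induction with
    | base => exact List.prefix_refl _
    | succ k _ ih => exact ih.trans (hL k)
  let x i := (L (i + 1))[i]'(hlen (i + 1))
  have hx : ∀ m i a, (L m)[i]? = some a → x i = a := by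
    intro m i a h
    have hi : (L (i + 1))[i]? = some (x i) := List.getElem?_eq_getElem _
    rcases le_total m (i + 1) with hm | hm
    · rw [(hmono hm).getElem?_eq_some h] at hi
      exact (Option.some_injective _ hi).symm
    · rw [(hmono hm).getElem?_eq_some hi] at h
      exact Option.some_injective _ h
  refine ⟨x, hx, fun n => List.ext_getElem? fun i => ?_⟩
  rw [List.getElem?_ofFn, List.getElem?_take]
  split_ifs with hi
  · rw [List.getElem?_eq_getElem (by have := hlen n; omega),
      hx n i _ (List.getElem?_eq_getElem _)]
  · rfl

theorem exists_injective_forall_mem_of_mk_Iio_lt {ι α : Type u} [LinearOrder ι]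
    [WellFoundedLT ι] (S : ι → Set α) (h : ∀ i, #(Iio i) < #(S i)) :
    ∃ c : ι → α, Function.Injective c ∧ ∀ i, c i ∈ S i := by
  have hfresh : ∀ i (c : Iio i → α), ∃ a ∈ S i, a ∉ range c := by
    intro i c
    by_contra! hc
    exact (h i).not_ge ((mk_le_mk_of_subset hc).trans mk_range_le)
  choose next hnext_mem hnext_fresh using hfresh
  let c : ι → α := wellFounded_lt.fix fun i rec => next i fun j => rec j.1 j.2
  have hc : ∀ i, c i = next i fun j => c j := wellFounded_lt.fix_eq _
  have hc_ne : ∀ {i j}, j < i → c i ≠ c j := fun {i j} hji hij => by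
    rw [hc i] at hij
    exact hnext_fresh i (fun k => c k) ⟨⟨j, hji⟩, hij.symm⟩
  refine ⟨c, fun i j hij => ?_, fun i => hc i ▸ hnext_mem i _⟩
  rcases lt_trichotomy i j with hlt | heq | hgt
  · exact absurd hij.symm (hc_ne hlt)
  · exact heq
  · exact absurd hij (hc_ne hgt)

theorem exists_injective_forall_mem_of_mk_le {ι α : Type u} (S : ι → Set α)
    (h : ∀ i, #ι ≤ #(S i)) : ∃ c : ι → α, Function.Injective c ∧ ∀ i, c i ∈ S i := by
  obtain ⟨e⟩ : Nonempty (ι ≃ (#ι).ord.ToType) := Cardinal.eq.1 (mk_ord_toType _).symm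
  have hIio : ∀ i : (#ι).ord.ToType, #(Iio i) < #ι := fun i => by
    simpa using mk_Iio_lt i (by simp)
  obtain ⟨c, hc, hcS⟩ := exists_injective_forall_mem_of_mk_Iio_lt (S ∘ e.symm)
    fun i => (hIio i).trans_le (h _)
  exact ⟨c ∘ e, hc.comp e.injective, fun i => by simpa using hcS (e i)⟩

theorem IsTree.nil_mem {T : Set (List ℕ)} (hT : IsTree T) : [] ∈ T := by
  obtain ⟨s, hs⟩ := hT.1
  simpa using hT.2 s hs 0

theorem treeBody_mono {P Q : Set (List ℕ)} (h : Q ⊆ P) : treeBody Q ⊆ treeBody P :=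
  fun _ hx n => h (hx n)

theorem IsSacksTree.exists_split {Q : Set (List ℕ)} (hQ : IsSacksTree Q) {s : List ℕ}
    (hs : s ∈ Q) :
    ∃ t, ∃ a : Bool → ℕ, Function.Injective a ∧ s <+: t ∧ ∀ d, t ++ [a d] ∈ Q := by
  obtain ⟨t, -, hst, b, hb, c, hc, hbc⟩ := hQ.2 s hs
  refine ⟨t, fun d => if d then b else c, ?_, hst, fun d => by cases d <;> assumption⟩
  intro d d' h
  cases d <;> cases d' <;> simp_all [eq_comm]

theorem IsSacksTree.exists_injective_treeBody {Q : Set (List ℕ)} (hQ : IsSacksTree Q) :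
    ∃ X : (ℕ → Bool) → ℕ → ℕ, Function.Injective X ∧ ∀ u, X u ∈ treeBody Q := by
  choose! t a ha hst hta using fun s (hs : s ∈ Q) => hQ.exists_split hs
  -- `M u n` is the node reached after `n` splittings, taking the branches `u 0, …, u (n - 1)`.
  let M (u : ℕ → Bool) (n : ℕ) : List ℕ := Nat.rec [] (fun k s => t s ++ [a s (u k)]) n
  have hM_succ : ∀ u n, M u (n + 1) = t (M u n) ++ [a (M u n) (u n)] := fun _ _ => rfl
  have hM_mem : ∀ u n, M u n ∈ Q := fun u n => by
    induction n with
    | zero => exact hQ.1.nil_mem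
    | succ n ih => exact hta _ ih _
  have hM_prefix : ∀ u n, M u n <+: M u (n + 1) := fun u n =>
    (hst _ (hM_mem u n)).trans (List.prefix_append _ _)
  have hM_len : ∀ u n, n ≤ (M u n).length := fun u n => by
    induction n with
    | zero => exact Nat.zero_le _
    | succ n ih =>
      have := (hst _ (hM_mem u n)).length_le
      simp only [hM_succ, List.length_append, List.length_singleton]
      omega
  choose X hX hXtake using fun u =>
    List.exists_limit_of_prefix_chain (M u) (hM_prefix u) (hM_len u)
  refine ⟨X, fun u v huv => ?_, fun u n => ?_⟩
  · by_contra hne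
    have hex : ∃ k, u k ≠ v k := Function.ne_iff.mp hne
    set n₀ := Nat.find hex
    have hM_eq : ∀ k ≤ n₀, M u k = M v k := fun k hk => by
      induction k with
      | zero => rfl
      | succ k ih =>
        rw [hM_succ, hM_succ, ih (by omega), not_not.1 (Nat.find_min hex (by omega : k < n₀))]
    -- at `n₀` the nodes of `u` and `v` split, so `X u` and `X v` differ at the splitting position
    have hbranch : ∀ w, M w n₀ = M u n₀ → X w (t (M u n₀)).length = a (M u n₀) (w n₀) := by
      intro w hw
      apply hX w (n₀ + 1)
      simp [hM_succ, hw]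
    apply Nat.find_spec hex (ha _ (hM_mem u n₀) _)
    rw [← hbranch u rfl, ← hbranch v (hM_eq n₀ le_rfl).symm, huv]
  · rw [hXtake]
    exact hQ.1.2 _ (hM_mem u n) n

theorem IsSacksTree.continuum_le_mk_treeBody {Q : Set (List ℕ)} (hQ : IsSacksTree Q) :
    𝔠 ≤ #(treeBody Q) := by
  obtain ⟨X, hX, hXQ⟩ := hQ.exists_injective_treeBody
  calc 𝔠 = #(ℕ → Bool) := by simp
    _ ≤ #(treeBody Q) := mk_le_of_injective (f := fun u => ⟨X u, hXQ u⟩)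
        fun u v h => hX (congrArg Subtype.val h)

def codeTree : Set (List ℕ) :=
  {s | ∀ i (hi : i < s.length), ∃ b : Bool, s[i] = 2 * Encodable.encode (s.take i, b)}

theorem append_mem_codeTree {s : List ℕ} (hs : s ∈ codeTree) (b : Bool) :
    s ++ [2 * Encodable.encode (s, b)] ∈ codeTree := by
  intro i hi
  rcases lt_or_ge i s.length with his | his
  · simpa [List.getElem_append_left his, List.take_append_of_le_length his.le] using hs i his
  · have hi' : i = s.length := by simp at hi; omega
    subst hi'
    exact ⟨b, by simp⟩

theorem isSacksTree_codeTree : IsSacksTree codeTree := by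
  refine ⟨⟨⟨[], fun i hi => absurd hi (Nat.not_lt_zero i)⟩, fun s hs n i hi => ?_⟩,
    fun s hs => ?_⟩
  · have hin : i < s.length := by simp at hi; omega
    obtain ⟨b, hb⟩ := hs i hin
    exact ⟨b, by simpa [List.take_take, min_eq_left (by simp at hi; omega : i ≤ n)] using hb⟩
  · refine ⟨s, hs, List.prefix_refl s, _, append_mem_codeTree hs false, _,
      append_mem_codeTree hs true, ?_⟩
    simp

theorem exists_apply_eq_encode_of_mem_treeBody_codeTree {x : ℕ → ℕ}
    (hx : x ∈ treeBody codeTree) (n : ℕ) :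
    ∃ b : Bool, x n = 2 * Encodable.encode (List.ofFn (fun i : Fin n => x i), b) := by
  obtain ⟨b, hb⟩ := hx (n + 1) n (by simp)
  have htake : (List.ofFn fun i : Fin (n + 1) => x i).take n = List.ofFn fun i : Fin n => x i :=
    List.ext_getElem (by simp) fun i _ _ => by simp only [List.getElem_take, List.getElem_ofFn]
  simp only [List.getElem_ofFn, htake] at hb
  exact ⟨b, hb⟩

theorem even_apply_of_mem_treeBody_codeTree {x : ℕ → ℕ} (hx : x ∈ treeBody codeTree) (n : ℕ) :
    Even (x n) := by
  obtain ⟨b, hb⟩ := exists_apply_eq_encode_of_mem_treeBody_codeTree hx n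
  exact ⟨_, hb.trans (two_mul _)⟩

theorem apply_eq_of_lt_of_apply_eq_of_mem_treeBody_codeTree {x y : ℕ → ℕ}
    (hx : x ∈ treeBody codeTree) (hy : y ∈ treeBody codeTree) {n : ℕ} (h : x n = y n) {i : ℕ}
    (hi : i < n) : x i = y i := by
  obtain ⟨b, hb⟩ := exists_apply_eq_encode_of_mem_treeBody_codeTree hx n
  obtain ⟨b', hb'⟩ := exists_apply_eq_encode_of_mem_treeBody_codeTree hy n
  have hpre := congrArg Prod.fst <| Encodable.encode_injective <|
    Nat.eq_of_mul_eq_mul_left two_pos (hb.symm.trans (h.trans hb'))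
  simpa [hi] using congrArg (·[i]?) hpre

theorem eq_of_infinite_setOf_eq_of_mem_treeBody_codeTree {x y : ℕ → ℕ}
    (hx : x ∈ treeBody codeTree) (hy : y ∈ treeBody codeTree) (h : {n | x n = y n}.Infinite) :
    x = y := by
  funext i
  obtain ⟨n, hn, hin⟩ := h.exists_gt i
  exact apply_eq_of_lt_of_apply_eq_of_mem_treeBody_codeTree hx hy hn hin

def oddShift (x : ℕ → ℕ) (n : ℕ) : ℕ := x n + n % 2

theorem infinite_setOf_eq_oddShift (x : ℕ → ℕ) : {n | x n = oddShift x n}.Infinite :=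
  Set.infinite_of_injective_forall_mem (mul_right_injective₀ two_ne_zero) fun k => by
    simp [oddShift]

theorem self_ne_oddShift (x : ℕ → ℕ) : x ≠ oddShift x := fun h => by
  simpa [oddShift] using congrFun h 1

theorem eq_of_infinite_setOf_eq_oddShift {x z : ℕ → ℕ} (hz : z ∈ treeBody codeTree)
    (hx : x ∈ treeBody codeTree) (h : {n | z n = oddShift x n}.Infinite) : z = x := by
  refine eq_of_infinite_setOf_eq_of_mem_treeBody_codeTree hz hx
    (h.mono fun n (hn : z n = x n + n % 2) => ?_)
  have hzn := even_apply_of_mem_treeBody_codeTree hz n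
  have hxn := even_apply_of_mem_treeBody_codeTree hx n
  show z n = x n
  grind

theorem edFamily_union_image_oddShift {F G : Set (ℕ → ℕ)} (hF : F ⊆ treeBody codeTree)
    (hG : G ⊆ treeBody codeTree) (hFG : Disjoint F G) : EDFamily (F ∪ oddShift '' G) := by
  intro p hp q hq hpq
  rw [← Set.not_infinite]
  intro hinf
  rcases hp with hp | ⟨x, hx, rfl⟩ <;> rcases hq with hq | ⟨y, hy, rfl⟩
  · exact hpq (eq_of_infinite_setOf_eq_of_mem_treeBody_codeTree (hF hp) (hF hq) hinf)
  · exact hFG.ne_of_mem hp hy (eq_of_infinite_setOf_eq_oddShift (hF hp) (hG hy) hinf)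
  · exact hFG.ne_of_mem hq hx
      (eq_of_infinite_setOf_eq_oddShift (hF hq) (hG hx) (by simpa only [eq_comm] using hinf))
  · exact hpq <| congrArg oddShift <|
      eq_of_infinite_setOf_eq_of_mem_treeBody_codeTree (hG hx) (hG hy)
        (by simpa [oddShift] using hinf)

theorem EDFamily.exists_medFamily_superset {E : Set (ℕ → ℕ)} (hE : EDFamily E) :
    ∃ A, E ⊆ A ∧ MEDFamily A := by
  have hchain : ∀ c ⊆ {C | EDFamily C}, IsChain (· ⊆ ·) c → EDFamily (⋃₀ c) := by
    rintro c hc hchain f ⟨C, hC, hfC⟩ g ⟨D, hD, hgD⟩ hfg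
    rcases hchain.total hC hD with h | h
    · exact hc hD f (h hfC) g hgD hfg
    · exact hc hC f hfC g (h hgD) hfg
  obtain ⟨A, hEA, hA⟩ := zorn_subset_nonempty {C | EDFamily C} (fun c hc hc' _ =>
    ⟨⋃₀ c, hchain c hc hc', fun _ => Set.subset_sUnion_of_mem⟩) E hE
  exact ⟨A, hEA, hA.prop, fun B hAB hB => hAB.2 (hA.2 hB hAB.1)⟩

theorem not_tMeasurable_of_forall_sacks_subtree {A : Set (ℕ → ℕ)} (hA : EDFamily A)
    (h : ∀ Q, IsSacksTree Q → Q ⊆ codeTree →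
      ∃ f ∈ treeBody Q, f ∈ A ∧ ∃ g ∈ treeBody Q, oddShift g ∈ A) :
    ¬ TMeasurable {T | IsSacksTree T} A := by
  intro hmeas
  obtain ⟨Q, hQ, hQP, hQA | hQA⟩ := hmeas codeTree isSacksTree_codeTree
  · obtain ⟨-, -, -, g, hg, hgA⟩ := h Q hQ hQP
    exact infinite_setOf_eq_oddShift g (hA _ (hQA hg) _ hgA (self_ne_oddShift g))
  · obtain ⟨f, hf, hfA, -⟩ := h Q hQ hQP
    exact Set.eq_empty_iff_forall_notMem.1 hQA f ⟨hf, hfA⟩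

/-- there is an s-nonmeasurable m.e.d. family. -/
theorem stmt18 :
    ∃ A : Set (ℕ → ℕ), MEDFamily A ∧ ¬ TMeasurable {T | IsSacksTree T} A := by
  let ι := {Q : Set (List ℕ) // IsSacksTree Q ∧ Q ⊆ codeTree} × Bool
  have hι : #ι ≤ 𝔠 :=
    calc #ι ≤ #(Set (List ℕ) × Bool) := mk_le_of_injective (f := Prod.map Subtype.val id)
          (Subtype.val_injective.prodMap fun _ _ => id)
      _ = 𝔠 := by simp
  obtain ⟨c, hc, hcQ⟩ := exists_injective_forall_mem_of_mk_le (fun p : ι => treeBody p.1.1)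
    fun p => hι.trans p.1.2.1.continuum_le_mk_treeBody
  have hcP : ∀ p, c p ∈ treeBody codeTree := fun p => treeBody_mono p.1.2.2 (hcQ p)
  have hE : EDFamily (range (fun Q => c (Q, false)) ∪ oddShift '' range fun Q => c (Q, true)) :=
    edFamily_union_image_oddShift (range_subset_iff.2 fun _ => hcP _)
      (range_subset_iff.2 fun _ => hcP _)
      (Set.disjoint_range_iff.2 fun _ _ h => Bool.false_ne_true (congrArg Prod.snd (hc h)))
  obtain ⟨A, hEA, hA⟩ := hE.exists_medFamily_superset
  refine ⟨A, hA, not_tMeasurable_of_forall_sacks_subtree hA.1 fun Q hQ hQP => ?_⟩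
  exact ⟨_, hcQ (⟨Q, hQ, hQP⟩, false), hEA (.inl ⟨_, rfl⟩),
    _, hcQ (⟨Q, hQ, hQP⟩, true), hEA (.inr ⟨_, ⟨_, rfl⟩, rfl⟩)⟩
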